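/- arXiv:1905.00803 — 5 statements merged into one kernel-verified Lean document; each statement's English description precedes it below -/
import Mathlib

section
/- Let (Ω, F, P) be a probability space on a standard Borel space, m ⊆ F a sub-σ-algebra, and I : Ω → {0,1} a binary random variable. Let π : Ω → ℝ be an m-measurable random variable with π = E[I | m] almost surely. Then the σ-algebra σ(I) generated by I and the σ-algebra m are conditionally independent given σ(π). (Lemma 2, part 2: since I_S is binary, its conditional distribution given D_P is completely specified by π_S, so I_S ⫫ D_P | π_S.) -/
open MeasureTheory ProbabilityTheory

/-- Lemma 2, part 2: if `I` is a binary random variable and `π` is an `m`-measurable version of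
`E[I | m]`, then `σ(I)` and `m` are conditionally independent given `σ(π)`. -/
theorem condIndep_comap_of_binary
    {Ω : Type*} (m : MeasurableSpace Ω) {mΩ : MeasurableSpace Ω} [StandardBorelSpace Ω]
    (P : Measure Ω) [IsProbabilityMeasure P]
    (hm : m ≤ mΩ)
    (I : Ω → ℝ) (hI : Measurable I) (hbin : ∀ ω, I ω = 0 ∨ I ω = 1)
    (π : Ω → ℝ) (hπ : Measurable[m] π)
    (hcond : π =ᵐ[P] P[I | m]) :
    CondIndep (MeasurableSpace.comap π Real.measurableSpace)
      (MeasurableSpace.comap I Real.measurableSpace) m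
      (hπ.comap_le.trans hm) P := by
  set m₀ : MeasurableSpace Ω := MeasurableSpace.comap π Real.measurableSpace with hm₀def
  have hm₀m : m₀ ≤ m := hπ.comap_le
  have hm₀ : m₀ ≤ mΩ := hm₀m.trans hm
  have hπ₀ : Measurable[m₀] π := Measurable.of_comap_le le_rfl
  have hI' : Measurable[mΩ] I := hI
  -- integrability facts
  have hIi : Integrable I P := by
    refine Integrable.mono' (integrable_const 1) hI'.aestronglyMeasurable ?_
    refine Filter.Eventually.of_forall fun ω => ?_
    rcases hbin ω with h | h <;> simp [h]
  have hπi : Integrable π P := (integrable_condExp).congr hcond.symm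
  -- π is a version of E[I | m₀] by the tower property
  have hkey : P[I | m₀] =ᵐ[P] π := by
    have h1 : P[P[I|m] | m₀] =ᵐ[P] P[I | m₀] := condExp_condExp_of_le hm₀m hm
    have h2 : P[P[I|m] | m₀] =ᵐ[P] P[π | m₀] := condExp_congr_ae hcond.symm
    have h3 : P[π | m₀] = π :=
      condExp_of_stronglyMeasurable hm₀ hπ₀.stronglyMeasurable hπi
    exact h1.symm.trans (h2.trans (by rw [h3]))
  -- main computation: E[I · 1_B | m₀] = π · E[1_B | m₀] for B ∈ m
  have hmain : ∀ B : Set Ω, MeasurableSet[m] B →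
      P[fun ω => B.indicator (fun _ => (1:ℝ)) ω * I ω | m₀]
        =ᵐ[P] π * P[B.indicator (fun _ => (1:ℝ)) | m₀] := by
    intro B hB
    have hBsm : StronglyMeasurable[m] (B.indicator (fun _ => (1:ℝ))) :=
      (stronglyMeasurable_const (β := ℝ)).indicator hB
    have hBi : Integrable (B.indicator (fun _ => (1:ℝ))) P := by
      refine Integrable.mono' (integrable_const 1)
        (hBsm.mono hm).aestronglyMeasurable ?_
      refine Filter.Eventually.of_forall fun ω => ?_
      by_cases h : ω ∈ B <;> simp [h]
    have hBIi : Integrable (fun ω => B.indicator (fun _ => (1:ℝ)) ω * I ω) P := by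
      refine Integrable.mono' hIi.norm
        ((hBsm.mono hm).measurable.mul hI').aestronglyMeasurable ?_
      refine Filter.Eventually.of_forall fun ω => ?_
      by_cases h : ω ∈ B <;> simp [h, abs_nonneg]
    have hπBi : Integrable (fun ω => π ω * B.indicator (fun _ => (1:ℝ)) ω) P := by
      refine Integrable.mono' hπi.norm
        ((hπ.mono hm le_rfl).mul (hBsm.mono hm).measurable).aestronglyMeasurable ?_
      refine Filter.Eventually.of_forall fun ω => ?_
      by_cases h : ω ∈ B <;> simp [h, abs_nonneg]
    -- step 1: condexp wrt m
    have h1 : P[fun ω => B.indicator (fun _ => (1:ℝ)) ω * I ω | m]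
        =ᵐ[P] B.indicator (fun _ => (1:ℝ)) * P[I | m] :=
      condExp_mul_of_stronglyMeasurable_left hBsm hBIi hIi
    -- step 2: tower
    have h2 : P[fun ω => B.indicator (fun _ => (1:ℝ)) ω * I ω | m₀]
        =ᵐ[P] P[fun ω => π ω * B.indicator (fun _ => (1:ℝ)) ω | m₀] := by
      refine ((condExp_condExp_of_le hm₀m hm).symm.trans ?_)
      refine condExp_congr_ae (h1.trans ?_)
      filter_upwards [hcond] with ω hω
      simp only [Pi.mul_apply, ← hω, mul_comm]
    -- step 3: pull out π
    have h3 : P[fun ω => π ω * B.indicator (fun _ => (1:ℝ)) ω | m₀]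
        =ᵐ[P] π * P[B.indicator (fun _ => (1:ℝ)) | m₀] :=
      condExp_mul_of_stronglyMeasurable_left hπ₀.stronglyMeasurable hπBi hBi
    exact h2.trans h3
  refine (condIndep_iff (mΩ := mΩ) m₀ (MeasurableSpace.comap I Real.measurableSpace) m
    hm₀ hI.comap_le hm P).mpr ?_
  intro A B hA hB
  obtain ⟨s, hs, rfl⟩ := hA
  by_cases h0 : (0 : ℝ) ∈ s <;> by_cases h1 : (1 : ℝ) ∈ s
  · -- A = univ
    have hAuniv : I ⁻¹' s = Set.univ := by
      ext ω; rcases hbin ω with h | h <;> simp [h, h0, h1]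
    rw [hAuniv, Set.univ_inter]
    have huniv : (Set.univ : Set Ω).indicator (fun _ => (1:ℝ)) = fun _ => (1:ℝ) := by
      simp
    rw [huniv, condExp_const hm₀ (1:ℝ)]
    filter_upwards with ω
    simp
  · -- indicator of A is 1 - I
    have hAind : (I ⁻¹' s).indicator (fun _ => (1:ℝ)) = fun ω => 1 - I ω := by
      funext ω; rcases hbin ω with h | h <;> simp [h, h0, h1]
    have hABind : ((I ⁻¹' s) ∩ B).indicator (fun _ => (1:ℝ))
        = fun ω => B.indicator (fun _ => (1:ℝ)) ω
            - B.indicator (fun _ => (1:ℝ)) ω * I ω := by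
      funext ω
      by_cases hωB : ω ∈ B
      · rcases hbin ω with h | h <;> simp [hωB, h, h0, h1]
      · simp [hωB]
    have hBsm : StronglyMeasurable[m] (B.indicator (fun _ => (1:ℝ))) :=
      (stronglyMeasurable_const (β := ℝ)).indicator hB
    have hBi : Integrable (B.indicator (fun _ => (1:ℝ))) P := by
      refine Integrable.mono' (integrable_const 1)
        (hBsm.mono hm).aestronglyMeasurable ?_
      refine Filter.Eventually.of_forall fun ω => ?_
      by_cases h : ω ∈ B <;> simp [h]
    have hBIi : Integrable (fun ω => B.indicator (fun _ => (1:ℝ)) ω * I ω) P := by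
      refine Integrable.mono' hIi.norm
        ((hBsm.mono hm).measurable.mul hI').aestronglyMeasurable ?_
      refine Filter.Eventually.of_forall fun ω => ?_
      by_cases h : ω ∈ B <;> simp [h, abs_nonneg]
    rw [hABind, hAind]
    have hsub := condExp_sub (m := m₀) (μ := P) hBi hBIi
    refine hsub.trans ?_
    have hconst : P[fun _ => (1:ℝ) | m₀] = fun _ => (1:ℝ) := condExp_const hm₀ 1
    have hsub2 := condExp_sub (m := m₀) (μ := P) (integrable_const (1:ℝ)) hIi
    have hAeq : P[fun ω => 1 - I ω | m₀]
        =ᵐ[P] fun ω => 1 - (P[I | m₀]) ω := by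
      have : (fun ω => 1 - I ω) = (fun _ => (1:ℝ)) - I := by funext ω; simp
      rw [this]
      refine hsub2.trans ?_
      rw [hconst]
      filter_upwards with ω
      simp
    filter_upwards [hmain B hB, hkey, hAeq] with ω hω hkω hAω
    simp only [Pi.mul_apply, Pi.sub_apply] at *
    rw [hω, hAω, hkω]
    ring
  · -- indicator of A is I
    have hAind : (I ⁻¹' s).indicator (fun _ => (1:ℝ)) = I := by
      funext ω; rcases hbin ω with h | h <;> simp [h, h0, h1]
    have hABind : ((I ⁻¹' s) ∩ B).indicator (fun _ => (1:ℝ))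
        = fun ω => B.indicator (fun _ => (1:ℝ)) ω * I ω := by
      funext ω
      by_cases hωB : ω ∈ B
      · rcases hbin ω with h | h <;> simp [hωB, h, h0, h1]
      · simp [hωB]
    rw [hABind, hAind]
    filter_upwards [hmain B hB, hkey] with ω hω hkω
    simp only [Pi.mul_apply] at *
    rw [hω, hkω]
  · -- A = ∅
    have hAempty : I ⁻¹' s = ∅ := by
      ext ω; rcases hbin ω with h | h <;> simp [h, h0, h1]
    rw [hAempty, Set.empty_inter]
    have hzero : ((∅ : Set Ω).indicator (fun _ => (1:ℝ))) = (0 : Ω → ℝ) := by funext ω; simp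
    rw [hzero, condExp_zero]
    filter_upwards with ω
    simp
end

section
/- Let (Ω, F, P) be a probability space on a standard Borel space and let I, X, Y, D be measurable maps from Ω into standard Borel spaces. Suppose π = h ∘ D for some measurable function h (so that π is σ(D)-measurable). Then I is conditionally independent of the triple (X, Y, D) given σ(π) if and only if both of the following hold: (i) I is conditionally independent of D given σ(π), and (ii) I is conditionally independent of (X, Y) given σ(D). (Lemma 3: under Assumption 1, Assumption 2 is equivalent to I_S ⫫ D_P | π_S together with I_S ⫫ (X_P, Y_P) | D_P.) -/
/-! Conditional independence `m₁ ⫫ m₂ | m'` holds iff `P(t | m' ⊔ m₂) = P(t | m')` a.s. for every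
`t ∈ m₁`; the forward direction is a π-λ argument on the rectangles `s₁ ∩ s₂` with `s₁ ∈ m'`,
`s₂ ∈ m₂`. Since `σ(π) ≤ σ(D)`, the three independence statements of the theorem become
`P(t | σ(X, Y, D)) = P(t | σ(π))`, `P(t | σ(D)) = P(t | σ(π))` and `P(t | σ(X, Y, D)) = P(t | σ(D))`
for `t ∈ σ(I)`, and the first is equivalent to the other two by the tower property along
`σ(π) ≤ σ(D) ≤ σ(X, Y, D)`. -/

open MeasureTheory ProbabilityTheory

open Set in
theorem IsPiSystem.image2_inter {α : Type*} {C D : Set (Set α)} (hC : IsPiSystem C)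
    (hD : IsPiSystem D) : IsPiSystem (image2 (· ∩ ·) C D) := by
  rintro _ ⟨s₁, hs₁, s₂, hs₂, rfl⟩ _ ⟨t₁, ht₁, t₂, ht₂, rfl⟩ ⟨x, hx⟩
  refine ⟨s₁ ∩ t₁, hC _ hs₁ _ ht₁ ⟨x, hx.1.1, hx.2.1⟩, s₂ ∩ t₂,
    hD _ hs₂ _ ht₂ ⟨x, hx.1.2, hx.2.2⟩, ?_⟩
  rw [inter_inter_inter_comm]

namespace MeasurableSpace

open Set

variable {α : Type*}

theorem sup_eq_generateFrom_image2_inter (m₁ m₂ : MeasurableSpace α) :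
    m₁ ⊔ m₂ =
      generateFrom (image2 (· ∩ ·) {s | MeasurableSet[m₁] s} {s | MeasurableSet[m₂] s}) := by
  refine le_antisymm (sup_le ?_ ?_) (generateFrom_le ?_)
  · exact fun s hs ↦ measurableSet_generateFrom ⟨s, hs, univ, .univ, inter_univ s⟩
  · exact fun s hs ↦ measurableSet_generateFrom ⟨univ, .univ, s, hs, univ_inter s⟩
  · rintro _ ⟨s₁, hs₁, s₂, hs₂, rfl⟩
    exact (le_sup_left (a := m₁) _ hs₁).inter (le_sup_right (a := m₁) _ hs₂)

end MeasurableSpace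

theorem setIntegral_eq_setIntegral_of_isPiSystem {α E : Type*} [NormedAddCommGroup E]
    [NormedSpace ℝ E] {m m₀ : MeasurableSpace α} {μ : Measure α} (hm : m ≤ m₀)
    {C : Set (Set α)} (h_eq : m = MeasurableSpace.generateFrom C) (h_pi : IsPiSystem C)
    {f g : α → E} (hf : Integrable f μ) (hg : Integrable g μ)
    (h_univ : ∫ x, f x ∂μ = ∫ x, g x ∂μ) (basic : ∀ s ∈ C, ∫ x in s, f x ∂μ = ∫ x in s, g x ∂μ)
    {s : Set α} (hs : MeasurableSet[m] s) : ∫ x in s, f x ∂μ = ∫ x in s, g x ∂μ := by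
  induction s, hs using MeasurableSpace.induction_on_inter h_eq h_pi with
  | empty => simp
  | basic s hs => exact basic s hs
  | compl s hs ih =>
    rw [← sub_eq_of_eq_add' (integral_add_compl (hm s hs) hf).symm,
      ← sub_eq_of_eq_add' (integral_add_compl (hm s hs) hg).symm, ih, h_univ]
  | iUnion s hdisj hs ih =>
    rw [integral_iUnion (fun i ↦ hm _ (hs i)) hdisj hf.integrableOn,
      integral_iUnion (fun i ↦ hm _ (hs i)) hdisj hg.integrableOn]
    exact tsum_congr ih

theorem condExp_ae_eq_condExp_iff_of_le {α E : Type*} [NormedAddCommGroup E]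
    [NormedSpace ℝ E] [CompleteSpace E] {m₁ m₂ m₃ m₀ : MeasurableSpace α} {μ : Measure α}
    (h₁₂ : m₁ ≤ m₂) (h₂₃ : m₂ ≤ m₃) (h₃ : m₃ ≤ m₀) [SigmaFinite (μ.trim (h₂₃.trans h₃))]
    [SigmaFinite (μ.trim h₃)] (f : α → E) :
    μ[f | m₃] =ᵐ[μ] μ[f | m₁] ↔ μ[f | m₂] =ᵐ[μ] μ[f | m₁] ∧ μ[f | m₃] =ᵐ[μ] μ[f | m₂] := by
  refine ⟨fun h ↦ ?_, fun ⟨h₂, h₃⟩ ↦ h₃.trans h₂⟩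
  have h₂ : μ[f | m₂] =ᵐ[μ] μ[f | m₁] := calc
    μ[f | m₂] =ᵐ[μ] μ[μ[f | m₃] | m₂] := (condExp_condExp_of_le h₂₃ h₃).symm
    _ =ᵐ[μ] μ[μ[f | m₁] | m₂] := condExp_congr_ae h
    _ = μ[f | m₁] := condExp_of_stronglyMeasurable (h₂₃.trans h₃)
        (stronglyMeasurable_condExp.mono h₁₂) integrable_condExp
  exact ⟨h₂, h.trans h₂.symm⟩

section CondIndep

variable {Ω : Type*} {m m' m₁ m₂ mΩ : MeasurableSpace Ω} {μ : Measure Ω}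

theorem condExp_indicator_of_stronglyMeasurable [IsFiniteMeasure μ] {g : Ω → ℝ}
    (hg : StronglyMeasurable[m] g) (hg_int : Integrable g μ) {s : Set Ω} (hs : MeasurableSet s) :
    μ[s.indicator g | m] =ᵐ[μ] g * μ⟦s | m⟧ := by
  have h_mul : s.indicator g = g * s.indicator fun _ ↦ (1 : ℝ) := by
    ext x; by_cases hx : x ∈ s <;> simp [hx]
  rw [h_mul]
  exact condExp_mul_of_stronglyMeasurable_left hg (h_mul ▸ hg_int.indicator hs)
    ((integrable_const 1).indicator hs)

variable [StandardBorelSpace Ω] [IsFiniteMeasure μ]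

theorem CondIndep.condExp_sup_ae_eq (hm' : m' ≤ mΩ) (hm₁ : m₁ ≤ mΩ) (hm₂ : m₂ ≤ mΩ)
    (h : CondIndep m' m₁ m₂ hm' μ) {t : Set Ω} (ht : MeasurableSet[m₁] t) :
    μ⟦t | m' ⊔ m₂⟧ =ᵐ[μ] μ⟦t | m'⟧ := by
  have ht' : MeasurableSet t := hm₁ t ht
  have hsup : m' ⊔ m₂ ≤ mΩ := sup_le hm' hm₂
  have h_ind : Integrable (t.indicator fun _ ↦ (1 : ℝ)) μ := (integrable_const 1).indicator ht'
  have h_rect : ∀ s ∈ Set.image2 (· ∩ ·) {s | MeasurableSet[m'] s} {s | MeasurableSet[m₂] s},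
      ∫ x in s, (μ⟦t | m'⟧) x ∂μ = ∫ x in s, t.indicator (fun _ ↦ (1 : ℝ)) x ∂μ := by
    rintro _ ⟨s₁, hs₁, s₂, hs₂, rfl⟩
    have hs₂' : MeasurableSet s₂ := hm₂ s₂ hs₂
    calc ∫ x in s₁ ∩ s₂, (μ⟦t | m'⟧) x ∂μ
        = ∫ x in s₁, s₂.indicator (μ⟦t | m'⟧) x ∂μ := (setIntegral_indicator hs₂').symm
      _ = ∫ x in s₁, (μ[s₂.indicator (μ⟦t | m'⟧) | m']) x ∂μ :=
        (setIntegral_condExp hm' (integrable_condExp.indicator hs₂') hs₁).symm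
      _ = ∫ x in s₁, (μ⟦t ∩ s₂ | m'⟧) x ∂μ := by
        refine integral_congr_ae (ae_restrict_of_ae ?_)
        exact (condExp_indicator_of_stronglyMeasurable stronglyMeasurable_condExp
          integrable_condExp hs₂').trans
          ((condIndep_iff m' m₁ m₂ hm' hm₁ hm₂ μ).1 h t s₂ ht hs₂).symm
      _ = ∫ x in s₁, s₂.indicator (t.indicator fun _ ↦ (1 : ℝ)) x ∂μ := by
        rw [setIntegral_condExp hm' ((integrable_const 1).indicator (ht'.inter hs₂')) hs₁,
          Set.indicator_indicator, Set.inter_comm]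
      _ = ∫ x in s₁ ∩ s₂, t.indicator (fun _ ↦ (1 : ℝ)) x ∂μ := setIntegral_indicator hs₂'
  refine (ae_eq_condExp_of_forall_setIntegral_eq hsup h_ind
    (fun _ _ _ ↦ integrable_condExp.integrableOn) (fun s hs _ ↦ ?_)
    (stronglyMeasurable_condExp.mono (le_sup_left (b := m₂))).aestronglyMeasurable).symm
  exact setIntegral_eq_setIntegral_of_isPiSystem hsup
    (MeasurableSpace.sup_eq_generateFrom_image2_inter m' m₂)
    (.image2_inter (@MeasurableSpace.isPiSystem_measurableSet _ m')
      (@MeasurableSpace.isPiSystem_measurableSet _ m₂))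
    integrable_condExp h_ind (integral_condExp hm') h_rect hs

theorem condIndep_of_condExp_sup_ae_eq (hm' : m' ≤ mΩ) (hm₁ : m₁ ≤ mΩ) (hm₂ : m₂ ≤ mΩ)
    (h : ∀ t, MeasurableSet[m₁] t → μ⟦t | m' ⊔ m₂⟧ =ᵐ[μ] μ⟦t | m'⟧) :
    CondIndep m' m₁ m₂ hm' μ := by
  refine (condIndep_iff m' m₁ m₂ hm' hm₁ hm₂ μ).2 fun t₁ t₂ ht₁ ht₂ ↦ ?_
  have h_ind : Integrable (t₁.indicator fun _ ↦ (1 : ℝ)) μ :=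
    (integrable_const 1).indicator (hm₁ t₁ ht₁)
  calc μ⟦t₁ ∩ t₂ | m'⟧
      = μ[t₂.indicator (t₁.indicator fun _ ↦ (1 : ℝ)) | m'] := by
        rw [Set.indicator_indicator, Set.inter_comm]
    _ =ᵐ[μ] μ[μ[t₂.indicator (t₁.indicator fun _ ↦ (1 : ℝ)) | m' ⊔ m₂] | m'] :=
        (condExp_condExp_of_le le_sup_left (sup_le hm' hm₂)).symm
    _ =ᵐ[μ] μ[t₂.indicator (μ⟦t₁ | m' ⊔ m₂⟧) | m'] :=
        condExp_congr_ae (condExp_indicator h_ind (le_sup_right (a := m') t₂ ht₂))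
    _ =ᵐ[μ] μ[t₂.indicator (μ⟦t₁ | m'⟧) | m'] := by
        refine condExp_congr_ae ?_
        filter_upwards [h t₁ ht₁] with x hx
        by_cases hx₂ : x ∈ t₂ <;> simp [hx₂, hx]
    _ =ᵐ[μ] μ⟦t₁ | m'⟧ * μ⟦t₂ | m'⟧ :=
        condExp_indicator_of_stronglyMeasurable stronglyMeasurable_condExp integrable_condExp
          (hm₂ t₂ ht₂)

theorem condIndep_iff_condExp_sup_ae_eq (hm' : m' ≤ mΩ) (hm₁ : m₁ ≤ mΩ) (hm₂ : m₂ ≤ mΩ) :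
    CondIndep m' m₁ m₂ hm' μ ↔ ∀ t, MeasurableSet[m₁] t → μ⟦t | m' ⊔ m₂⟧ =ᵐ[μ] μ⟦t | m'⟧ :=
  ⟨fun h _ ↦ CondIndep.condExp_sup_ae_eq hm' hm₁ hm₂ h, condIndep_of_condExp_sup_ae_eq hm' hm₁ hm₂⟩

theorem condIndep_sup_iff {mD : MeasurableSpace Ω} (hm'D : m' ≤ mD) (hD : mD ≤ mΩ)
    (hm₁ : m₁ ≤ mΩ) (hm₂ : m₂ ≤ mΩ) :
    CondIndep m' m₁ (m₂ ⊔ mD) (hm'D.trans hD) μ ↔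
      CondIndep m' m₁ mD (hm'D.trans hD) μ ∧ CondIndep mD m₁ m₂ hD μ := by
  rw [condIndep_iff_condExp_sup_ae_eq _ hm₁ (sup_le hm₂ hD),
    condIndep_iff_condExp_sup_ae_eq _ hm₁ hD, condIndep_iff_condExp_sup_ae_eq hD hm₁ hm₂,
    sup_of_le_right (hm'D.trans le_sup_right), sup_of_le_right hm'D, sup_comm, ← forall₂_and]
  exact forall₂_congr fun t _ ↦
    condExp_ae_eq_condExp_iff_of_le hm'D le_sup_left (sup_le hD hm₂) _

end CondIndep

theorem condIndepFun_triple_iff_general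
    {Ω : Type*} {mΩ : MeasurableSpace Ω} [StandardBorelSpace Ω]
    (P : Measure Ω) [IsProbabilityMeasure P]
    {EI EX EY ED : Type*} [MeasurableSpace EI] [MeasurableSpace EX]
    [MeasurableSpace EY] [MeasurableSpace ED]
    (I : Ω → EI) (hI : Measurable I)
    (X : Ω → EX) (hX : Measurable X)
    (Y : Ω → EY) (hY : Measurable Y)
    (D : Ω → ED) (hD : Measurable D)
    (h : ED → ℝ) (hh : Measurable h) :
    CondIndepFun (MeasurableSpace.comap (h ∘ D) Real.measurableSpace)
        (((hh.comp hD).comap_le).trans le_rfl) I (fun ω => (X ω, Y ω, D ω)) P ↔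
      (CondIndepFun (MeasurableSpace.comap (h ∘ D) Real.measurableSpace)
          (((hh.comp hD).comap_le).trans le_rfl) I D P ∧
        CondIndepFun (MeasurableSpace.comap D inferInstance)
          (hD.comap_le) I (fun ω => (X ω, Y ω)) P) := by
  have h_comap : MeasurableSpace.comap (fun ω ↦ (X ω, Y ω, D ω)) inferInstance =
      MeasurableSpace.comap (fun ω ↦ (X ω, Y ω)) inferInstance ⊔
        MeasurableSpace.comap D inferInstance := by
    simp only [Prod.instMeasurableSpace, MeasurableSpace.comap_prodMk, sup_assoc]
  have h_πD : MeasurableSpace.comap (h ∘ D) Real.measurableSpace ≤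
      MeasurableSpace.comap D inferInstance :=
    (hh.comp (Measurable.of_comap_le le_rfl)).comap_le
  simp only [condIndepFun_iff_condIndep]
  rw [h_comap]
  exact condIndep_sup_iff h_πD hD.comap_le hI.comap_le (hX.prodMk hY).comap_le

/-- Lemma 3: if `π = h ∘ D` is `σ(D)`-measurable, then `I ⫫ (X, Y, D) ∣ σ(π)` holds if and only
if both `I ⫫ D ∣ σ(π)` and `I ⫫ (X, Y) ∣ σ(D)` hold. -/
theorem condIndepFun_triple_iff
    {Ω : Type*} {mΩ : MeasurableSpace Ω} [StandardBorelSpace Ω]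
    (P : Measure Ω) [IsProbabilityMeasure P]
    {EI EX EY ED : Type*} [MeasurableSpace EI] [StandardBorelSpace EI]
    [MeasurableSpace EX] [StandardBorelSpace EX]
    [MeasurableSpace EY] [StandardBorelSpace EY]
    [MeasurableSpace ED] [StandardBorelSpace ED]
    (I : Ω → EI) (hI : Measurable I)
    (X : Ω → EX) (hX : Measurable X)
    (Y : Ω → EY) (hY : Measurable Y)
    (D : Ω → ED) (hD : Measurable D)
    (h : ED → ℝ) (hh : Measurable h) :
    CondIndepFun (MeasurableSpace.comap (h ∘ D) Real.measurableSpace)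
        (((hh.comp hD).comap_le).trans le_rfl) I (fun ω => (X ω, Y ω, D ω)) P ↔
      (CondIndepFun (MeasurableSpace.comap (h ∘ D) Real.measurableSpace)
          (((hh.comp hD).comap_le).trans le_rfl) I D P ∧
        CondIndepFun (MeasurableSpace.comap D inferInstance)
          (hD.comap_le) I (fun ω => (X ω, Y ω)) P) :=
  condIndepFun_triple_iff_general (mΩ := mΩ) P I hI X hX Y hY D hD h hh
end

section
/- Fix n ≥ 1, positive reals ν₁, …, νₙ, a parameter set Θ, and for each θ ∈ Θ vectors ψ₁(θ), …, ψₙ(θ) ∈ ℝʳ. Let Δ = {w ∈ ℝⁿ : wᵢ ≥ 0 for all i and ∑ᵢ wᵢ = 1}, let L(w) = ∏ᵢ (n νᵢ wᵢ) / (∑ᵢ νᵢ wᵢ)ⁿ, let W_θ = {w ∈ Δ : ∑ᵢ wᵢ ψᵢ(θ) = 0}, let V = {θ ∈ Θ : ∑ᵢ νᵢ⁻¹ ψᵢ(θ) = 0}, and let Θ̂_CE = {θ ∈ Θ : there exists w ∈ W_θ such that L(w′) ≤ L(w) for every θ′ ∈ Θ and every w′ ∈ W_{θ′}}. If V is nonempty,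 then V = Θ̂_CE. (Theorem 1: the maximum conditional empirical likelihood estimators coincide exactly with the solutions of the inverse-conditional-visibility weighted estimating equations.) -/
/-!
With `S = ∑ ν_i w_i`, the likelihood is `L(w) = ∏ y_i` for `y_i = n ν_i w_i / S`, nonnegative
numbers summing to `n`. Since `y ≤ exp (y - 1)`, with equality only at `y = 1`, `L ≤ 1` on the
simplex, and `L(w) = 1` exactly when `ν_i w_i` is constant, i.e. when `w` is the normalized
inverse-visibility weight `p_i ∝ ν_i⁻¹`. Hence if some `θ₀` solves the weighted equation, then
`p ∈ W_θ₀` attains the global maximum `1`, every maximizer `(θ, w)` has `w = p`, and `p ∈ W_θ`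
says exactly that `θ` solves the weighted equation.
-/

open Finset Real

section ProdLeOne

variable {ι : Type*} [Fintype ι] {y : ι → ℝ}

lemma prod_exp_sub_one_eq_one (hsum : ∑ i, y i = Fintype.card ι) :
    ∏ i, exp (y i - 1) = 1 := by
  rw [← exp_sum, sum_sub_distrib, hsum]
  simp

lemma prod_le_one_of_sum_eq_card (hy : ∀ i, 0 ≤ y i) (hsum : ∑ i, y i = Fintype.card ι) :
    ∏ i, y i ≤ 1 :=
  calc ∏ i, y i ≤ ∏ i, exp (y i - 1) :=
        prod_le_prod (fun i _ ↦ hy i) fun i _ ↦ by linarith [add_one_le_exp (y i - 1)]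
    _ = 1 := prod_exp_sub_one_eq_one hsum

lemma eq_one_of_one_le_prod_of_sum_eq_card (hy : ∀ i, 0 ≤ y i)
    (hsum : ∑ i, y i = Fintype.card ι) (hprod : 1 ≤ ∏ i, y i) (i : ι) : y i = 1 := by
  by_contra hne
  have hpos : ∀ j, 0 < y j := fun j ↦ (hy j).lt_of_ne' fun hj ↦ by
    rw [prod_eq_zero (mem_univ j) hj] at hprod
    exact zero_lt_one.not_ge hprod
  have hlt : ∏ j, y j < ∏ j, exp (y j - 1) :=
    prod_lt_prod (fun j _ ↦ hpos j) (fun j _ ↦ by linarith [add_one_le_exp (y j - 1)])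
      ⟨i, mem_univ i, by linarith [add_one_lt_exp (sub_ne_zero.2 hne)]⟩
  rw [prod_exp_sub_one_eq_one hsum] at hlt
  exact hlt.not_ge hprod

end ProdLeOne

section CondEmpLik

variable {ι : Type*} [Fintype ι] {ν w : ι → ℝ}

noncomputable def condEmpLik (ν w : ι → ℝ) : ℝ :=
  (∏ i, ((Fintype.card ι : ℝ) * ν i * w i)) / (∑ i, ν i * w i) ^ Fintype.card ι

noncomputable def invVisibilityWeights (ν : ι → ℝ) : ι → ℝ :=
  fun i ↦ (ν i)⁻¹ / ∑ j, (ν j)⁻¹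

lemma condEmpLik_eq_prod_div :
    condEmpLik ν w = ∏ i, (Fintype.card ι : ℝ) * ν i * w i / ∑ j, ν j * w j := by
  rw [condEmpLik, prod_div_distrib, prod_const, card_univ]

lemma sum_mul_pos_of_mem_stdSimplex (hν : ∀ i, 0 < ν i) (hw : w ∈ stdSimplex ℝ ι) :
    0 < ∑ i, ν i * w i := by
  obtain ⟨j, -, hj⟩ : ∃ j ∈ univ, (0 : ι → ℝ) j < w j :=
    exists_lt_of_sum_lt (by simp [hw.2])
  exact sum_pos' (fun i _ ↦ mul_nonneg (hν i).le (hw.1 i)) ⟨j, mem_univ j, mul_pos (hν j) hj⟩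

lemma sum_card_mul_div_eq_card (hS : 0 < ∑ i, ν i * w i) :
    ∑ i, (Fintype.card ι : ℝ) * ν i * w i / ∑ j, ν j * w j = Fintype.card ι := by
  simp_rw [mul_assoc]
  rw [← sum_div, ← mul_sum, mul_div_cancel_right₀ _ hS.ne']

lemma card_mul_mul_div_nonneg (hν : ∀ i, 0 < ν i) (hw : w ∈ stdSimplex ℝ ι) (i : ι) :
    0 ≤ (Fintype.card ι : ℝ) * ν i * w i / ∑ j, ν j * w j :=
  div_nonneg (mul_nonneg (mul_nonneg (Nat.cast_nonneg _) (hν i).le) (hw.1 i))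
    (sum_mul_pos_of_mem_stdSimplex hν hw).le

lemma condEmpLik_le_one (hν : ∀ i, 0 < ν i) (hw : w ∈ stdSimplex ℝ ι) : condEmpLik ν w ≤ 1 := by
  rw [condEmpLik_eq_prod_div]
  exact prod_le_one_of_sum_eq_card (card_mul_mul_div_nonneg hν hw)
    (sum_card_mul_div_eq_card (sum_mul_pos_of_mem_stdSimplex hν hw))

lemma sum_inv_pos_of_pos [Nonempty ι] (hν : ∀ i, 0 < ν i) : 0 < ∑ j, (ν j)⁻¹ :=
  sum_pos (fun j _ ↦ inv_pos.2 (hν j)) univ_nonempty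

lemma invVisibilityWeights_mem_stdSimplex [Nonempty ι] (hν : ∀ i, 0 < ν i) :
    invVisibilityWeights ν ∈ stdSimplex ℝ ι :=
  ⟨fun i ↦ div_nonneg (inv_pos.2 (hν i)).le (sum_inv_pos_of_pos hν).le,
    by unfold invVisibilityWeights; rw [← sum_div, div_self (sum_inv_pos_of_pos hν).ne']⟩

lemma condEmpLik_invVisibilityWeights [Nonempty ι] (hν : ∀ i, 0 < ν i) :
    condEmpLik ν (invVisibilityWeights ν) = 1 := by
  have hνp : ∀ i, ν i * invVisibilityWeights ν i = (∑ j, (ν j)⁻¹)⁻¹ := fun i ↦ by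
    rw [invVisibilityWeights, mul_div_assoc', mul_inv_cancel₀ (hν i).ne', one_div]
  rw [condEmpLik_eq_prod_div]
  refine prod_eq_one fun i _ ↦ ?_
  simp_rw [mul_assoc, hνp, sum_const, card_univ, nsmul_eq_mul]
  exact div_self (mul_ne_zero (Nat.cast_ne_zero.2 Fintype.card_ne_zero)
    (inv_ne_zero (sum_inv_pos_of_pos hν).ne'))

lemma eq_invVisibilityWeights_of_one_le_condEmpLik (hν : ∀ i, 0 < ν i)
    (hw : w ∈ stdSimplex ℝ ι) (h : 1 ≤ condEmpLik ν w) : w = invVisibilityWeights ν := by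
  have hS := sum_mul_pos_of_mem_stdSimplex hν hw
  rw [condEmpLik_eq_prod_div] at h
  have hy := eq_one_of_one_le_prod_of_sum_eq_card
    (card_mul_mul_div_nonneg hν hw) (sum_card_mul_div_eq_card hS) h
  have : Nonempty ι := (nonempty_of_sum_ne_zero hS.ne').to_type
  obtain ⟨t, ht⟩ : ∃ t, ∀ i, w i = t * (ν i)⁻¹ := ⟨(∑ j, ν j * w j) / Fintype.card ι, fun i ↦ by
    have hyi := hy i
    rw [div_eq_one_iff_eq hS.ne'] at hyi
    rw [← hyi]
    field_simp [(hν i).ne']⟩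
  have htc : t * ∑ j, (ν j)⁻¹ = 1 := by
    rw [mul_sum, ← hw.2]
    exact sum_congr rfl fun i _ ↦ (ht i).symm
  funext i
  rw [ht i, eq_inv_of_mul_eq_one_left htc, inv_mul_eq_div, invVisibilityWeights]

lemma sum_invVisibilityWeights_smul_eq_zero_iff {M : Type*} [AddCommGroup M] [Module ℝ M]
    [Nonempty ι] (hν : ∀ i, 0 < ν i) (ψ : ι → M) :
    ∑ i, invVisibilityWeights ν i • ψ i = 0 ↔ ∑ i, (ν i)⁻¹ • ψ i = 0 := by
  have hp : ∑ i, invVisibilityWeights ν i • ψ i = (∑ j, (ν j)⁻¹)⁻¹ • ∑ i, (ν i)⁻¹ • ψ i := by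
    simp_rw [smul_sum, smul_smul, invVisibilityWeights, div_eq_inv_mul]
  rw [hp, smul_eq_zero, or_iff_right (inv_ne_zero (sum_inv_pos_of_pos hν).ne')]

end CondEmpLik

/-- Theorem 1: if the solution set `V` of the inverse-visibility weighted estimating equations
is nonempty, it coincides with the set `Θ̂_CE` of maximum conditional empirical likelihood
estimators. -/
theorem solutions_eq_max_cond_emp_lik
    {n r : ℕ} (hn : 1 ≤ n) (ν : Fin n → ℝ) (hν : ∀ i, 0 < ν i)
    {Θ : Type*} (ψ : Θ → Fin n → (Fin r → ℝ)) :
    ∀ (Δ : Set (Fin n → ℝ)), Δ = {w | (∀ i, 0 ≤ w i) ∧ ∑ i, w i = 1} →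
    ∀ (L : (Fin n → ℝ) → ℝ),
      L = (fun w => (∏ i, ((n : ℝ) * ν i * w i)) / (∑ i, ν i * w i) ^ n) →
    ∀ (W : Θ → Set (Fin n → ℝ)), W = (fun θ => {w ∈ Δ | ∑ i, w i • ψ θ i = 0}) →
    ∀ (V : Set Θ), V = {θ | ∑ i, (ν i)⁻¹ • ψ θ i = 0} →
    ∀ (ΘCE : Set Θ),
      ΘCE = {θ | ∃ w ∈ W θ, ∀ θ' : Θ, ∀ w' ∈ W θ', L w' ≤ L w} →
    V.Nonempty → V = ΘCE := by
  rintro Δ rfl L hL W rfl V rfl ΘCE rfl ⟨θ₀, hθ₀⟩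
  have : Nonempty (Fin n) := ⟨⟨0, hn⟩⟩
  obtain rfl : L = condEmpLik ν := by
    rw [hL]; funext w; simp [condEmpLik]
  have hmem : ∀ θ, invVisibilityWeights ν ∈ {w ∈ stdSimplex ℝ (Fin n) | ∑ i, w i • ψ θ i = 0} ↔
      ∑ i, (ν i)⁻¹ • ψ θ i = 0 := fun θ ↦
    (and_iff_right (invVisibilityWeights_mem_stdSimplex hν)).trans
      (sum_invVisibilityWeights_smul_eq_zero_iff hν (ψ θ))
  ext θ
  constructor
  · intro hθ
    exact ⟨_, (hmem θ).2 hθ, fun _ w' hw' ↦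
      (condEmpLik_le_one hν hw'.1).trans (condEmpLik_invVisibilityWeights hν).ge⟩
  · rintro ⟨w, hw, hmax⟩
    have hp := hmax θ₀ _ ((hmem θ₀).2 hθ₀)
    rw [condEmpLik_invVisibilityWeights hν] at hp
    obtain rfl := eq_invVisibilityWeights_of_one_le_condEmpLik hν hw.1 hp
    exact (hmem θ).1 hw
end

section
/- Fix n ≥ 1, positive reals ν₁, …, νₙ, and vectors ψ₁, …, ψₙ ∈ ℝʳ with ∑ᵢ νᵢ⁻¹ ψᵢ = 0. Let Δ = {w ∈ ℝⁿ : wᵢ ≥ 0, ∑ᵢ wᵢ = 1}, W = {w ∈ Δ : ∑ᵢ wᵢ ψᵢ = 0}, and L(w) = ∏ᵢ (n νᵢ wᵢ) / (∑ᵢ νᵢ wᵢ)ⁿ. Then the weight vector ŵ defined by ŵᵢ = νᵢ⁻¹ / (∑ⱼ νⱼ⁻¹) belongs to W, satisfies L(ŵ) = 1, and is the unique maximizer of L over W: for every w ∈ W with w ≠ ŵ, L(w) < L(ŵ). (Corollary 1: the maximum conditional empirical likelihood estimate of the population distribution F⁰ puts mass proportional to 1/νᵢ on the i-th sampled point.)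 -/
/-!
With `xᵢ = νᵢ wᵢ`, the likelihood is `∏ (n xᵢ) / (∑ xᵢ)ⁿ`, which by AM-GM is at most `1`, with
equality exactly when all `xᵢ` agree. On the simplex the `xᵢ` agree only at `w = ŵ`, and `ŵ`
satisfies the moment constraint because it is a rescaling of `∑ νᵢ⁻¹ ψᵢ = 0`.
-/

open Finset

theorem Real.prod_lt_sum_div_card_pow {ι : Type*} {s : Finset ι} {z : ι → ℝ}
    (hz : ∀ i ∈ s, 0 ≤ z i) (hne : ∃ j ∈ s, ∃ k ∈ s, z j ≠ z k) :
    ∏ i ∈ s, z i < ((∑ i ∈ s, z i) / #s) ^ #s := by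
  have hs : (0 : ℝ) < #s := by
    obtain ⟨j, hj, -⟩ := hne
    exact_mod_cast card_pos.mpr ⟨j, hj⟩
  have hamgm := (Real.geom_mean_lt_arith_mean_weighted_iff_of_pos s (fun _ ↦ (#s : ℝ)⁻¹) z
    (fun _ _ ↦ inv_pos.mpr hs) (by simp [hs.ne']) hz).mpr hne
  rw [Real.finsetProd_rpow s z hz, ← mul_sum, inv_mul_eq_div] at hamgm
  calc ∏ i ∈ s, z i = ((∏ i ∈ s, z i) ^ (#s : ℝ)⁻¹) ^ #s :=
        (Real.rpow_inv_natCast_pow (prod_nonneg hz) (by exact_mod_cast hs.ne')).symm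
    _ < ((∑ i ∈ s, z i) / #s) ^ #s :=
        pow_lt_pow_left₀ hamgm (Real.rpow_nonneg (prod_nonneg hz) _) (by exact_mod_cast hs.ne')

theorem Real.prod_card_mul_div_sum_pow_lt_one {ι : Type*} {s : Finset ι} {z : ι → ℝ}
    (hz : ∀ i ∈ s, 0 ≤ z i) (hne : ∃ j ∈ s, ∃ k ∈ s, z j ≠ z k) :
    (∏ i ∈ s, ((#s : ℝ) * z i)) / (∑ i ∈ s, z i) ^ #s < 1 := by
  have hs : (0 : ℝ) < #s := by
    obtain ⟨j, hj, -⟩ := hne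
    exact_mod_cast card_pos.mpr ⟨j, hj⟩
  have hamgm := Real.prod_lt_sum_div_card_pow hz hne
  have hmean : 0 < ((∑ i ∈ s, z i) / #s) ^ #s := (prod_nonneg hz).trans_lt hamgm
  have hsum : 0 < (∑ i ∈ s, z i) ^ #s := by
    rw [div_pow] at hmean
    exact (div_pos_iff_of_pos_right (by positivity)).mp hmean
  rw [div_lt_one hsum, prod_mul_distrib, prod_const]
  calc (#s : ℝ) ^ #s * ∏ i ∈ s, z i < (#s : ℝ) ^ #s * ((∑ i ∈ s, z i) / #s) ^ #s := by gcongr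
    _ = (∑ i ∈ s, z i) ^ #s := by rw [← mul_pow, mul_div_cancel₀ _ hs.ne']

theorem eq_inv_div_sum_inv_of_mul_eq {ι : Type*} [Fintype ι] {ν w : ι → ℝ} (hν : ∀ i, ν i ≠ 0)
    (hw : ∑ i, w i = 1) (h : ∀ i j, ν i * w i = ν j * w j) :
    w = fun i ↦ (ν i)⁻¹ / ∑ j, (ν j)⁻¹ := by
  funext i
  have : ν i * w i * ∑ j, (ν j)⁻¹ = 1 := by
    rw [mul_sum, ← hw]
    refine sum_congr rfl fun j _ ↦ ?_
    rw [h i j, mul_comm (ν j), mul_assoc, mul_inv_cancel₀ (hν j), mul_one]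
  have hS : ∑ j, (ν j)⁻¹ ≠ 0 := by rintro h0; simp [h0] at this
  rw [eq_div_iff hS]
  exact eq_inv_of_mul_eq_one_right (by rwa [← mul_assoc])

/-- Corollary 1: if `∑ᵢ νᵢ⁻¹ ψᵢ = 0`, the weights `ŵᵢ = νᵢ⁻¹ / ∑ⱼ νⱼ⁻¹` satisfy the model
constraint, have conditional empirical likelihood `1`, and uniquely maximise the conditional
empirical likelihood over the constrained set `W`. -/
theorem hajek_weights_unique_maximizer
    {n r : ℕ} (hn : 1 ≤ n) (ν : Fin n → ℝ) (hν : ∀ i, 0 < ν i)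
    (ψ : Fin n → (Fin r → ℝ)) (hψ : ∑ i, (ν i)⁻¹ • ψ i = 0) :
    ∀ (Δ : Set (Fin n → ℝ)), Δ = {w | (∀ i, 0 ≤ w i) ∧ ∑ i, w i = 1} →
    ∀ (W : Set (Fin n → ℝ)), W = {w ∈ Δ | ∑ i, w i • ψ i = 0} →
    ∀ (L : (Fin n → ℝ) → ℝ),
      L = (fun w => (∏ i, ((n : ℝ) * ν i * w i)) / (∑ i, ν i * w i) ^ n) →
    ∀ (what : Fin n → ℝ), what = (fun i => (ν i)⁻¹ / ∑ j, (ν j)⁻¹) →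
      what ∈ W ∧ L what = 1 ∧ ∀ w ∈ W, w ≠ what → L w < L what := by
  rintro Δ rfl W rfl L rfl what rfl
  set S := ∑ j, (ν j)⁻¹
  have hS : 0 < S := sum_pos (fun i _ ↦ inv_pos.mpr (hν i)) ⟨⟨0, hn⟩, mem_univ _⟩
  have hνwhat : ∀ i, ν i * ((ν i)⁻¹ / S) = S⁻¹ := fun i ↦ by
    rw [mul_div_assoc', mul_inv_cancel₀ (hν i).ne', one_div]
  have hLwhat : (∏ i, ((n : ℝ) * ν i * ((ν i)⁻¹ / S))) / (∑ i, ν i * ((ν i)⁻¹ / S)) ^ n = 1 := by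
    simp only [mul_assoc, hνwhat, prod_const, sum_const, card_univ, Fintype.card_fin, nsmul_eq_mul]
    exact div_self (pow_ne_zero _ (by positivity))
  have hmoment : ∑ i, ((ν i)⁻¹ / S) • ψ i = 0 := by
    simp_rw [div_eq_inv_mul, mul_smul, ← smul_sum, hψ, smul_zero]
  refine ⟨⟨⟨fun i ↦ div_nonneg (inv_pos.mpr (hν i)).le hS.le, by rw [← sum_div, div_self hS.ne']⟩,
    hmoment⟩, hLwhat, ?_⟩
  rintro w ⟨⟨hw0, hw1⟩, -⟩ hne
  have hunequal : ∃ j ∈ univ, ∃ k ∈ univ, ν j * w j ≠ ν k * w k := by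
    by_contra! h
    exact hne (eq_inv_div_sum_inv_of_mul_eq (fun i ↦ (hν i).ne') hw1
      fun i j ↦ h i (mem_univ _) j (mem_univ _))
  beta_reduce
  rw [hLwhat]
  simp only [mul_assoc]
  simpa using Real.prod_card_mul_div_sum_pow_lt_one
    (fun i _ ↦ mul_nonneg (hν i).le (hw0 i)) hunequal
end

section
/- Let U ⊆ ℝᵖ be open, let ν₁, …, νₙ be positive reals, let ψᵢ : U → ℝʳ be differentiable for i = 1, …, n, and let κ : U → ℝʳ be differentiable, such that for every θ ∈ U: νᵢ + ⟨κ(θ), ψᵢ(θ)⟩ > 0 for all i, and ∑ᵢ ψᵢ(θ) / (νᵢ + ⟨κ(θ), ψᵢ(θ)⟩) = 0 (equation (kappa)). Define ℓ(θ) = ∑ᵢ log νᵢ − ∑ᵢ log(νᵢ + ⟨κ(θ), ψᵢ(θ)⟩). Then for every θ ∈ U and every direction v ∈ ℝᵖ, the derivative of ℓ at θ in direction v equals −∑ᵢ ⟨κ(θ), Dψᵢ(θ)[v]⟩ / (νᵢ + ⟨κ(θ), ψᵢ(θ)⟩). Consequently, at any local maximizer θ̂ of ℓ in U, ∑ᵢ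 ⟨κ(θ̂), Dψᵢ(θ̂)[v]⟩ / (νᵢ + ⟨κ(θ̂), ψᵢ(θ̂)⟩) = 0 for all v (equation (deriv)). (Theorem 2: every maximum conditional empirical likelihood estimator satisfies the pair of estimating equations (kappa) and (deriv).) -/
/-!
Envelope argument: differentiating `ℓ` along `v` by the chain rule produces, besides the claimed
term, the contribution `∑ᵢ ⟨Dκ(θ)[v], ψᵢ(θ)⟩ / (νᵢ + ⟨κ(θ), ψᵢ(θ)⟩)` of the moving multiplier.
This is `Dκ(θ)[v]` paired with the left-hand side of (kappa), hence zero. At a local maximiser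
every directional derivative vanishes, which gives (deriv).
-/

open Finset Matrix

theorem HasDerivAt.dotProduct {𝕜 ι : Type*} [NontriviallyNormedField 𝕜] [Fintype ι]
    {f g : 𝕜 → ι → 𝕜} {f' g' : ι → 𝕜} {t : 𝕜}
    (hf : HasDerivAt f f' t) (hg : HasDerivAt g g' t) :
    HasDerivAt (fun s ↦ f s ⬝ᵥ g s) (f' ⬝ᵥ g t + f t ⬝ᵥ g') t := by
  have hterm : ∀ j ∈ (univ : Finset ι),
      HasDerivAt (fun s ↦ f s j * g s j) (f' j * g t j + f t j * g' j) t :=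
    fun j _ ↦ (hasDerivAt_pi.1 hf j).mul (hasDerivAt_pi.1 hg j)
  have h := HasDerivAt.fun_sum hterm
  rw [sum_add_distrib] at h
  exact h

theorem HasLineDerivAt.dotProduct {𝕜 E ι : Type*} [NontriviallyNormedField 𝕜] [AddCommGroup E]
    [Module 𝕜 E] [Fintype ι] {x v : E} {f g : E → ι → 𝕜} {f' g' : ι → 𝕜}
    (hf : HasLineDerivAt 𝕜 f f' x v) (hg : HasLineDerivAt 𝕜 g g' x v) :
    HasLineDerivAt 𝕜 (fun y ↦ f y ⬝ᵥ g y) (f' ⬝ᵥ g x + f x ⬝ᵥ g') x v := by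
  have h := HasDerivAt.dotProduct hf hg
  simp only [zero_smul, add_zero] at h
  exact h

theorem HasLineDerivAt.log {E : Type*} [AddCommGroup E] [Module ℝ E] {x v : E}
    {f : E → ℝ} {f' : ℝ} (hf : HasLineDerivAt ℝ f f' x v) (hx : f x ≠ 0) :
    HasLineDerivAt ℝ (fun y ↦ Real.log (f y)) (f' / f x) x v := by
  have h := HasDerivAt.log hf (by simpa only [zero_smul, add_zero] using hx)
  simp only [zero_smul, add_zero] at h
  exact h

theorem sum_dotProduct_div_eq_zero {K ι m : Type*} [Field K] [Fintype ι] [Fintype m]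
    {w : ι → K} {ψ : ι → m → K} (h : ∑ i, (w i)⁻¹ • ψ i = 0) (u : m → K) :
    ∑ i, u ⬝ᵥ ψ i / w i = 0 :=
  calc ∑ i, u ⬝ᵥ ψ i / w i = u ⬝ᵥ ∑ i, (w i)⁻¹ • ψ i := by
        simp only [dotProduct_sum, dotProduct_smul, smul_eq_mul, div_eq_inv_mul]
    _ = 0 := by rw [h, dotProduct_zero]

section ProfileLoglik

variable {E ι m : Type*} [AddCommGroup E] [Module ℝ E] [Fintype ι] [Fintype m]

noncomputable def profileLoglik (ν : ι → ℝ) (κ : E → m → ℝ) (ψ : ι → E → m → ℝ) (θ : E) : ℝ :=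
  ∑ i, Real.log (ν i) - ∑ i, Real.log (ν i + κ θ ⬝ᵥ ψ i θ)

variable {ν : ι → ℝ} {κ : E → m → ℝ} {ψ : ι → E → m → ℝ} {κ' : m → ℝ} {ψ' : ι → m → ℝ}
  {x v : E}

theorem hasLineDerivAt_profileLoglik (hκ : HasLineDerivAt ℝ κ κ' x v)
    (hψ : ∀ i, HasLineDerivAt ℝ (ψ i) (ψ' i) x v) (hne : ∀ i, ν i + κ x ⬝ᵥ ψ i x ≠ 0) :
    HasLineDerivAt ℝ (profileLoglik ν κ ψ)
      (-∑ i, (κ' ⬝ᵥ ψ i x + κ x ⬝ᵥ ψ' i) / (ν i + κ x ⬝ᵥ ψ i x)) x v := by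
  have hlog : ∀ i ∈ (univ : Finset ι), HasLineDerivAt ℝ
      (fun y ↦ Real.log (ν i + κ y ⬝ᵥ ψ i y))
      ((κ' ⬝ᵥ ψ i x + κ x ⬝ᵥ ψ' i) / (ν i + κ x ⬝ᵥ ψ i x)) x v :=
    -- `HasLineDerivAt` unfolds to `HasDerivAt` along `t ↦ x + t • v`, so the one-variable rules apply
    fun i _ ↦ HasLineDerivAt.log (HasDerivAt.const_add (ν i) (hκ.dotProduct (hψ i))) (hne i)
  exact (HasDerivAt.fun_sum hlog).const_sub (∑ i, Real.log (ν i))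

theorem hasLineDerivAt_profileLoglik_of_sum_inv_smul_eq_zero (hκ : HasLineDerivAt ℝ κ κ' x v)
    (hψ : ∀ i, HasLineDerivAt ℝ (ψ i) (ψ' i) x v) (hne : ∀ i, ν i + κ x ⬝ᵥ ψ i x ≠ 0)
    (hkappa : ∑ i, (ν i + κ x ⬝ᵥ ψ i x)⁻¹ • ψ i x = 0) :
    HasLineDerivAt ℝ (profileLoglik ν κ ψ)
      (-∑ i, κ x ⬝ᵥ ψ' i / (ν i + κ x ⬝ᵥ ψ i x)) x v := by
  convert hasLineDerivAt_profileLoglik hκ hψ hne using 2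
  simp only [add_div, sum_add_distrib, sum_dotProduct_div_eq_zero hkappa κ', zero_add]

end ProfileLoglik

theorem profile_loglik_deriv_and_stationarity_general
    {p r n : ℕ} (U : Set (Fin p → ℝ))
    (ν : Fin n → ℝ)
    (ψ : Fin n → (Fin p → ℝ) → (Fin r → ℝ))
    (Dψ : Fin n → (Fin p → ℝ) → ((Fin p → ℝ) →L[ℝ] (Fin r → ℝ)))
    (hψ : ∀ i, ∀ θ ∈ U, HasFDerivAt (ψ i) (Dψ i θ) θ)
    (κ : (Fin p → ℝ) → (Fin r → ℝ))
    (Dκ : (Fin p → ℝ) → ((Fin p → ℝ) →L[ℝ] (Fin r → ℝ)))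
    (hκ : ∀ θ ∈ U, HasFDerivAt κ (Dκ θ) θ)
    (hpos : ∀ θ ∈ U, ∀ i, 0 < ν i + κ θ ⬝ᵥ ψ i θ)
    (hkappa : ∀ θ ∈ U, ∑ i, (ν i + κ θ ⬝ᵥ ψ i θ)⁻¹ • ψ i θ = 0)
    (ℓ : (Fin p → ℝ) → ℝ)
    (hℓ : ℓ = fun θ => ∑ i, Real.log (ν i) - ∑ i, Real.log (ν i + κ θ ⬝ᵥ ψ i θ)) :
    (∀ θ ∈ U, ∀ v : Fin p → ℝ,
        HasLineDerivAt ℝ ℓ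
          (-∑ i, (κ θ ⬝ᵥ (Dψ i θ v)) / (ν i + κ θ ⬝ᵥ ψ i θ)) θ v) ∧
      (∀ θhat ∈ U, IsLocalMax ℓ θhat →
        ∀ v : Fin p → ℝ,
          ∑ i, (κ θhat ⬝ᵥ (Dψ i θhat v)) / (ν i + κ θhat ⬝ᵥ ψ i θhat) = 0) := by
  have hderiv : ∀ θ ∈ U, ∀ v : Fin p → ℝ,
      HasLineDerivAt ℝ ℓ (-∑ i, (κ θ ⬝ᵥ (Dψ i θ v)) / (ν i + κ θ ⬝ᵥ ψ i θ)) θ v := by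
    intro θ hθ v
    subst hℓ
    exact hasLineDerivAt_profileLoglik_of_sum_inv_smul_eq_zero ((hκ θ hθ).hasLineDerivAt v)
      (fun i ↦ (hψ i θ hθ).hasLineDerivAt v) (fun i ↦ (hpos θ hθ i).ne') (hkappa θ hθ)
  refine ⟨hderiv, fun θhat hθ hmax v ↦ ?_⟩
  exact neg_eq_zero.1 (hmax.hasLineDerivAt_eq_zero (hderiv θhat hθ v))

/-- Theorem 2: with `κ(θ)` defined by equation (kappa), the profiled conditional empirical
log-likelihood `ℓ` has directional derivative `−∑ᵢ ⟨κ(θ), Dψᵢ(θ)[v]⟩/(νᵢ + ⟨κ(θ), ψᵢ(θ)⟩)`,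
and at any local maximiser this directional derivative vanishes (equation (deriv)). -/
theorem profile_loglik_deriv_and_stationarity
    {p r n : ℕ} (U : Set (Fin p → ℝ)) (hU : IsOpen U)
    (ν : Fin n → ℝ) (hν : ∀ i, 0 < ν i)
    (ψ : Fin n → (Fin p → ℝ) → (Fin r → ℝ))
    (Dψ : Fin n → (Fin p → ℝ) → ((Fin p → ℝ) →L[ℝ] (Fin r → ℝ)))
    (hψ : ∀ i, ∀ θ ∈ U, HasFDerivAt (ψ i) (Dψ i θ) θ)
    (κ : (Fin p → ℝ) → (Fin r → ℝ))
    (Dκ : (Fin p → ℝ) → ((Fin p → ℝ) →L[ℝ] (Fin r → ℝ)))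
    (hκ : ∀ θ ∈ U, HasFDerivAt κ (Dκ θ) θ)
    (hpos : ∀ θ ∈ U, ∀ i, 0 < ν i + κ θ ⬝ᵥ ψ i θ)
    (hkappa : ∀ θ ∈ U, ∑ i, (ν i + κ θ ⬝ᵥ ψ i θ)⁻¹ • ψ i θ = 0)
    (ℓ : (Fin p → ℝ) → ℝ)
    (hℓ : ℓ = fun θ => ∑ i, Real.log (ν i) - ∑ i, Real.log (ν i + κ θ ⬝ᵥ ψ i θ)) :
    (∀ θ ∈ U, ∀ v : Fin p → ℝ,
        HasLineDerivAt ℝ ℓ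
          (-∑ i, (κ θ ⬝ᵥ (Dψ i θ v)) / (ν i + κ θ ⬝ᵥ ψ i θ)) θ v) ∧
      (∀ θhat ∈ U, IsLocalMax ℓ θhat →
        ∀ v : Fin p → ℝ,
          ∑ i, (κ θhat ⬝ᵥ (Dψ i θhat v)) / (ν i + κ θhat ⬝ᵥ ψ i θhat) = 0) :=
  profile_loglik_deriv_and_stationarity_general U ν ψ Dψ hψ κ Dκ hκ hpos hkappa ℓ hℓ
end
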